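/- arXiv:2009.11030 — 4 statements merged into one kernel-verified Lean document; each statement's English description precedes it below -/
import Mathlib

section
/- For every natural number N and every monotone function f : [0,1] → Fin (N+1), there exists a unique monotone function s : Fin N → [0,1] such that the set {t ∈ [0,1] | f(t) ≠ f_s(t)} is finite. -/
open scoped Classical

/-- The step function associated with a tuple `s : Fin N → [0,1]`:
`f_s(t) = card {i : Fin N | s i ≤ t}`, an element of `Fin (N+1)`. -/
noncomputable def stepFun {N : ℕ} (s : Fin N → unitInterval) (t : unitInterval) :
    Fin (N + 1) :=
  ⟨(Finset.univ.filter fun i => s i ≤ t).card,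
    Nat.lt_succ_of_le ((Finset.card_filter_le _ _).trans (by simp))⟩

lemma step_le_iff {N : ℕ} {s : Fin N → unitInterval} (hs : Monotone s) (t : unitInterval)
    (i : Fin N) : s i ≤ t ↔ (i : ℕ) < (stepFun s t : ℕ) := by
  constructor
  · intro h
    have hsub : Finset.Iic i ⊆ Finset.univ.filter fun j => s j ≤ t := by
      intro j hj
      simp only [Finset.mem_Iic] at hj
      simp only [Finset.mem_filter, Finset.mem_univ, true_and]
      exact le_trans (hs hj) h
    have := Finset.card_le_card hsub
    rw [Fin.card_Iic] at this
    simp only [stepFun]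
    omega
  · intro h
    by_contra hc
    have hsub : (Finset.univ.filter fun j => s j ≤ t) ⊆ Finset.Iio i := by
      intro j hj
      simp only [Finset.mem_filter, Finset.mem_univ, true_and] at hj
      simp only [Finset.mem_Iio]
      by_contra hji
      exact hc (le_trans (hs (not_lt.mp hji)) hj)
    have := Finset.card_le_card hsub
    rw [Fin.card_Iio] at this
    simp only [stepFun] at h
    omega

lemma not_lt_aux {N : ℕ} (f : unitInterval → Fin (N + 1)) {s s' : Fin N → unitInterval}
    (hs : Monotone s) (hs' : Monotone s')
    (h : {t | f t ≠ stepFun s t}.Finite) (h' : {t | f t ≠ stepFun s' t}.Finite)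
    (i : Fin N) : ¬ s i < s' i := by
  intro hlt
  have hinf : (Set.Ioo (s i) (s' i)).Infinite :=
    Set.infinite_coe_iff.mp (Set.Ioo.infinite hlt)
  obtain ⟨t, ht⟩ := (hinf.diff (h.union h')).nonempty
  obtain ⟨⟨ht1, ht2⟩, htE⟩ := ht
  simp only [Set.mem_union, Set.mem_setOf_eq, not_or, not_not] at htE
  have h1 : (i : ℕ) < (stepFun s t : ℕ) := (step_le_iff hs t i).mp ht1.le
  rw [← htE.1, htE.2] at h1
  exact absurd ((step_le_iff hs' t i).mpr h1) (not_le.mpr ht2)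

/-- for every natural number `N` and every monotone function
`f : [0,1] → Fin (N+1)`, there exists a unique monotone `s : Fin N → [0,1]` such that
the set `{t ∈ [0,1] | f t ≠ f_s t}` is finite. -/
theorem statement5 (N : ℕ) (f : unitInterval → Fin (N + 1)) (hf : Monotone f) :
    ∃! s : Fin N → unitInterval, Monotone s ∧ {t | f t ≠ stepFun s t}.Finite := by
  set J : Fin N → Set ℝ :=
    fun i => (fun t : unitInterval => (t : ℝ)) '' {t | (i : ℕ) < (f t : ℕ)} ∪ {1} with hJ
  have hne : ∀ i, (J i).Nonempty := fun i => ⟨1, Or.inr rfl⟩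
  have hbdd : ∀ i, BddBelow (J i) := by
    refine fun i => ⟨0, fun x hx => ?_⟩
    rcases hx with ⟨t, _, rfl⟩ | hx
    · exact t.2.1
    · simp only [Set.mem_singleton_iff] at hx; simp [hx]
  have hmem : ∀ i, sInf (J i) ∈ unitInterval := by
    intro i
    constructor
    · refine le_csInf (hne i) (fun x hx => ?_)
      rcases hx with ⟨t, _, rfl⟩ | hx
      · exact t.2.1
      · simp only [Set.mem_singleton_iff] at hx; simp [hx]
    · exact csInf_le (hbdd i) (Or.inr rfl)
  set s : Fin N → unitInterval := fun i => ⟨sInf (J i), hmem i⟩ with hsdef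
  have hmono : Monotone s := by
    intro i j hij
    show sInf (J i) ≤ sInf (J j)
    refine csInf_le_csInf (hbdd i) (hne j) ?_
    rintro x (⟨t, ht, rfl⟩ | hx)
    · exact Or.inl ⟨t, show (i : ℕ) < (f t : ℕ) from
        lt_of_le_of_lt (show (i : ℕ) ≤ (j : ℕ) by exact_mod_cast hij) ht, rfl⟩
    · exact Or.inr hx
  have hkey : ∀ t : unitInterval, t ∉ Set.range s → f t = stepFun s t := by
    intro t ht
    have hiff : ∀ i : Fin N, s i ≤ t ↔ (i : ℕ) < (f t : ℕ) := by
      intro i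
      constructor
      · intro hle
        have hne' : s i ≠ t := fun h => ht ⟨i, h⟩
        have hlt : sInf (J i) < (t : ℝ) := lt_of_le_of_ne hle (fun h => hne' (Subtype.ext h))
        obtain ⟨x, hx, hxt⟩ := exists_lt_of_csInf_lt (hne i) hlt
        rcases hx with ⟨u, hu, rfl⟩ | hx
        · exact lt_of_lt_of_le hu (by exact_mod_cast hf (le_of_lt (by exact_mod_cast hxt)))
        · simp only [Set.mem_singleton_iff] at hx
          exact absurd (hx ▸ hxt) (not_lt.mpr t.2.2)
      · intro hlt
        exact csInf_le (hbdd i) (Or.inl ⟨t, hlt, rfl⟩)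
    have hft : (f t : ℕ) ≤ N := Nat.lt_succ_iff.mp (f t).2
    have hcard : (Finset.univ.filter fun j => s j ≤ t).card = (f t : ℕ) := by
      have : (Finset.univ.filter fun j => s j ≤ t)
          = Finset.univ.filter fun j : Fin N => (j : ℕ) < (f t : ℕ) := by
        ext j; simp [hiff j]
      rw [this]
      rcases eq_or_lt_of_le hft with h | h
      · simp [h]
      · have : (Finset.univ.filter fun j : Fin N => (j : ℕ) < (f t : ℕ))
            = Finset.Iio ⟨(f t : ℕ), h⟩ := by
          ext j; simp [Fin.lt_def]
        rw [this, Fin.card_Iio]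
    exact Fin.ext (by simp [stepFun, hcard])
  have hfin : {t | f t ≠ stepFun s t}.Finite := by
    refine (Set.finite_range s).subset ?_
    intro t ht
    by_contra hr
    exact ht (hkey t hr)
  refine ⟨s, ⟨hmono, hfin⟩, ?_⟩
  rintro s' ⟨hs', hfin'⟩
  funext i
  exact le_antisymm (not_lt.mp (not_lt_aux f hmono hs' hfin hfin' i))
    (not_lt.mp (not_lt_aux f hs' hmono hfin' hfin i))
end

section
/- Fix a natural number N and let ≈ be the equivalence relation on the set of monotone functions [0,1] → Fin (N+1) defined by f ≈ g iff the set {t ∈ [0,1] | f(t) ≠ g(t)} is finite. Then the map s ↦ [f_s] is a bijection from the set {s : Fin N → [0,1] | s is monotone} (equivalently, from the standard geometric simplex {(s₁,…,s_N) ∈ ℝ^N : 0 ≤ s₁ ≤ … ≤ s_N ≤ 1}) onto the quotient of the set of monotone functions [0,1] → Fin (N+1) by ≈. -/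
open scoped Classical

lemma stepFun_monotone {N : ℕ} (s : Fin N → unitInterval) : Monotone (stepFun s) := by
  intro t t' htt'
  refine Fin.mk_le_mk.mpr (Finset.card_le_card ?_)
  intro i hi
  simp only [Finset.mem_filter] at hi ⊢
  exact ⟨hi.1, hi.2.trans htt'⟩

/-- The equivalence relation on monotone functions `[0,1] → Fin (N+1)` identifying two
functions iff they differ on a finite set. -/
def finDiffSetoid (N : ℕ) : Setoid {f : unitInterval → Fin (N + 1) // Monotone f} where
  r f g := {t | f.1 t ≠ g.1 t}.Finite
  iseqv := by
    constructor
    · intro f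
      simp
    · intro f g hfg
      exact hfg.subset fun t ht => Ne.symm ht
    · intro f g h hfg hgh
      refine (hfg.union hgh).subset fun t ht => ?_
      by_cases hc : f.1 t = g.1 t
      · exact Or.inr fun he => ht (hc.trans he)
      · exact Or.inl hc

section StepFun

variable {N : ℕ}

lemma val_lt_stepFun_iff {s : Fin N → unitInterval} (hs : Monotone s) (i : Fin N)
    (t : unitInterval) : (i : ℕ) < stepFun s t ↔ s i ≤ t :=
  Fin.lt_card_filter_univ_iff_apply_of_imp _ fun _ _ hji hi => (hs hji).trans hi

lemma stepFun_eq_of_forall_le_iff {s : Fin N → unitInterval} {t : unitInterval}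
    {m : Fin (N + 1)} (h : ∀ i, s i ≤ t ↔ (i : ℕ) < m) : stepFun s t = m := by
  refine Fin.ext ?_
  change (Finset.univ.filter fun i => s i ≤ t).card = m
  rw [Finset.filter_congr fun i _ => h i, Fin.card_filter_val_lt]
  exact min_eq_right (Nat.lt_succ_iff.mp m.isLt)

lemma Ico_subset_stepFun_ne {s s' : Fin N → unitInterval} (hs : Monotone s)
    (hs' : Monotone s') (i : Fin N) :
    Set.Ico (s i) (s' i) ⊆ {t | stepFun s t ≠ stepFun s' t} := by
  rintro t ⟨hst, hts'⟩ heq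
  have hlt := (val_lt_stepFun_iff hs i t).2 hst
  rw [heq, val_lt_stepFun_iff hs' i t] at hlt
  exact hts'.not_ge hlt

lemma le_of_finite_stepFun_ne {s s' : Fin N → unitInterval} (hs : Monotone s)
    (hs' : Monotone s') (h : {t | stepFun s t ≠ stepFun s' t}.Finite) : s' ≤ s :=
  fun i => not_lt.1 fun hlt => Set.Ico_infinite hlt (h.subset (Ico_subset_stepFun_ne hs hs' i))

lemma eq_of_finite_stepFun_ne {s s' : Fin N → unitInterval} (hs : Monotone s)
    (hs' : Monotone s') (h : {t | stepFun s t ≠ stepFun s' t}.Finite) : s = s' :=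
  le_antisymm (le_of_finite_stepFun_ne hs' hs (by simpa only [ne_comm] using h))
    (le_of_finite_stepFun_ne hs hs' h)

end StepFun

section JumpPoints

variable {N : ℕ} {f : unitInterval → Fin (N + 1)}

noncomputable def jumpPoints (f : unitInterval → Fin (N + 1)) (i : Fin N) : unitInterval :=
  sInf {t | (i : ℕ) < f t}

lemma jumpPoints_monotone (f : unitInterval → Fin (N + 1)) : Monotone (jumpPoints f) :=
  fun _ _ hij => sInf_le_sInf fun _ ht => lt_of_le_of_lt (Fin.val_le_of_le hij) ht

lemma jumpPoints_le_iff (hf : Monotone f) {i : Fin N} {t : unitInterval}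
    (ht : t ≠ jumpPoints f i) : jumpPoints f i ≤ t ↔ (i : ℕ) < f t := by
  refine ⟨fun hle => ?_, fun hlt => sInf_le hlt⟩
  obtain ⟨t', hit', ht't⟩ := sInf_lt_iff.1 (lt_of_le_of_ne hle ht.symm)
  exact lt_of_lt_of_le hit' (hf ht't.le)

lemma stepFun_jumpPoints (hf : Monotone f) {t : unitInterval}
    (ht : t ∉ Set.range (jumpPoints f)) : stepFun (jumpPoints f) t = f t :=
  stepFun_eq_of_forall_le_iff fun i => jumpPoints_le_iff hf fun h => ht ⟨i, h.symm⟩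

end JumpPoints

/-- the map `s ↦ [f_s]` is a bijection from the set of monotone tuples
`s : Fin N → [0,1]` (equivalently, the standard geometric `N`-simplex
`{0 ≤ s₁ ≤ … ≤ s_N ≤ 1}`) onto the quotient of the set of monotone functions
`[0,1] → Fin (N+1)` by the relation `f ≈ g ↔ {t | f t ≠ g t}` is finite. -/
theorem statement6 (N : ℕ) :
    Function.Bijective (fun s : {s : Fin N → unitInterval // Monotone s} =>
      Quotient.mk (finDiffSetoid N) ⟨stepFun s.1, stepFun_monotone s.1⟩) := by
  constructor
  · rintro ⟨s, hs⟩ ⟨s', hs'⟩ h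
    exact Subtype.ext (eq_of_finite_stepFun_ne hs hs' (Quotient.exact h))
  · refine Quotient.ind ?_
    rintro ⟨f, hf⟩
    refine ⟨⟨jumpPoints f, jumpPoints_monotone f⟩, Quotient.sound ?_⟩
    exact (Set.finite_range (jumpPoints f)).subset fun t hne =>
      by_contra fun ht => hne (stepFun_jumpPoints hf ht)
end

section
/- Let N be a natural number, δ > 0 a real number, and let s, s' : Fin N → [0,1] be monotone, with associated step functions f_s, f_{s'} : [0,1] → Fin (N+1). If for every t ∈ [0,1] there exists t' ∈ [0,1] with t ≤ t' ≤ t + δ and f_s(t') = f_{s'}(t'), then |s(i) − s'(i)| ≤ δ for every i : Fin N. -/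
open scoped Classical

lemma aux7 {N : ℕ} (s s' : Fin N → unitInterval) (hs : Monotone s) (hs' : Monotone s')
    (i : Fin N) (t' : unitInterval) (h1 : s' i ≤ t') (h2 : t' < s i) :
    stepFun s t' ≠ stepFun s' t' := by
  intro heq
  have hle : (Finset.univ.filter fun j => s j ≤ t').card ≤ i.val := by
    have hsub : (Finset.univ.filter fun j => s j ≤ t') ⊆ Finset.Iio i := by
      intro j hj
      simp only [Finset.mem_filter] at hj
      simp only [Finset.mem_Iio]
      by_contra hji
      exact absurd ((hs (le_of_not_gt hji)).trans hj.2) (not_le_of_gt h2)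
    calc _ ≤ (Finset.Iio i).card := Finset.card_le_card hsub
      _ = i.val := by simp
  have hge : i.val + 1 ≤ (Finset.univ.filter fun j => s' j ≤ t').card := by
    have hsub : Finset.Iic i ⊆ (Finset.univ.filter fun j => s' j ≤ t') := by
      intro j hj
      simp only [Finset.mem_Iic] at hj
      simp only [Finset.mem_filter, Finset.mem_univ, true_and]
      exact (hs' hj).trans h1
    calc i.val + 1 = (Finset.Iic i).card := by simp
      _ ≤ _ := Finset.card_le_card hsub
  have : (stepFun s t').val = (stepFun s' t').val := congrArg Fin.val heq
  simp only [stepFun] at this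
  omega

/-- if `s, s' : Fin N → [0,1]` are monotone and the pair of step functions
`(f_s, f_{s'})` lies in the `δ`-Skorokhod neighbourhood — i.e. every `t ∈ [0,1]` admits
a forward perturbation `t ≤ t' ≤ t + δ` with `f_s(t') = f_{s'}(t')` — then
`|s i − s' i| ≤ δ` for every `i`. -/
theorem statement7 (N : ℕ) (δ : ℝ) (hδ : 0 < δ) (s s' : Fin N → unitInterval)
    (hs : Monotone s) (hs' : Monotone s')
    (h : ∀ t : unitInterval, ∃ t' : unitInterval,
      t ≤ t' ∧ (t' : ℝ) ≤ (t : ℝ) + δ ∧ stepFun s t' = stepFun s' t') :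
    ∀ i : Fin N, |(s i : ℝ) - (s' i : ℝ)| ≤ δ := by
  intro i
  rw [abs_sub_le_iff]
  constructor
  · by_contra hc
    push_neg at hc
    obtain ⟨t', ht1, ht2, ht3⟩ := h (s' i)
    refine aux7 s s' hs hs' i t' ht1 ?_ ht3
    rw [← Subtype.coe_lt_coe]
    linarith
  · by_contra hc
    push_neg at hc
    obtain ⟨t', ht1, ht2, ht3⟩ := h (s i)
    refine aux7 s' s hs' hs i t' ht1 ?_ ht3.symm
    rw [← Subtype.coe_lt_coe]
    linarith
end

section
/- Let k ≥ 1 and let u : Fin (k+1) → [0,1] be the uniform grid u(i) = i/k. Suppose w : Fin (R+1) → [0,1] is monotone and admits u as a face, i.e. there is a monotone map α : Fin (k+1) → Fin (R+1) with w(α(i)) = i/k for all i. Then w(j+1) − w(j) ≤ 1/k for every j with j, j+1 ∈ Fin (R+1); consequently, for every monotone θ : Fin (n+1) → Fin (R+1) whose index span satisfies θ(n) ≤ θ(0) + m, the face v = w ∘ θ satisfies v(n) − v(0) ≤ m/k. -/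
/-! Every grid value `i / k` is a value of the monotone `w`, so none of them can lie strictly
between two consecutive values `w j < w (j + 1)`; but an open subinterval of `[0, 1]` longer
than `1 / k` always contains a grid value. The bound on a face of index span `m` then follows
by adding up at most `m` consecutive gaps. -/

theorem Monotone.apply_notMem_Ioo_castSucc_succ {β : Type*} [LinearOrder β] {R : ℕ}
    {f : Fin (R + 1) → β} (hf : Monotone f) (j : Fin R) (x : Fin (R + 1)) :
    f x ∉ Set.Ioo (f j.castSucc) (f j.succ) := by
  rintro ⟨hlo, hhi⟩
  rcases Fin.succ_le_or_le_castSucc x j with hx | hx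
  · exact (hf hx).not_gt hhi
  · exact (hf hx).not_gt hlo

theorem exists_nat_div_mem_Ioo {k : ℕ} (hk : 0 < k) {a b : ℝ} (ha : 0 ≤ a) (hb : b ≤ 1)
    (hab : a + 1 / k < b) : ∃ i ≤ k, (i : ℝ) / k ∈ Set.Ioo a b := by
  have hk' : (0 : ℝ) < k := by exact_mod_cast hk
  set i := ⌊k * a⌋₊ + 1
  have hlo : a < (i : ℝ) / k := by
    rw [lt_div_iff₀ hk', mul_comm]; push_cast [i]; exact Nat.lt_floor_add_one _
  have hhi : (i : ℝ) / k < b := by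
    have : (⌊k * a⌋₊ : ℝ) ≤ k * a := Nat.floor_le (by positivity)
    calc (i : ℝ) / k = (⌊k * a⌋₊ : ℝ) / k + 1 / k := by push_cast [i]; ring
      _ ≤ a + 1 / k := by gcongr; rwa [div_le_iff₀' hk']
      _ < b := hab
  refine ⟨i, ?_, hlo, hhi⟩
  have : (i : ℝ) < k := by rw [← div_lt_one hk']; linarith
  exact_mod_cast this.le

theorem Fin.apply_sub_apply_le_of_succ_sub_castSucc_le {R : ℕ} {f : Fin (R + 1) → ℝ}
    (hf : Monotone f) {δ : ℝ} (hδ₀ : 0 ≤ δ) (hδ : ∀ j : Fin R, f j.succ - f j.castSucc ≤ δ)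
    {a b : Fin (R + 1)} {d : ℕ} (hab : (b : ℕ) ≤ a + d) : f b - f a ≤ d * δ := by
  induction d generalizing b with
  | zero =>
    have : f b ≤ f a := hf (Fin.le_def.mpr (by omega))
    rw [Nat.cast_zero, zero_mul]; linarith
  | succ d ih =>
    push_cast
    by_cases hb : (b : ℕ) ≤ a + d
    · linarith [ih hb]
    · obtain ⟨j, rfl⟩ : ∃ j : Fin R, b = j.succ := ⟨⟨b - 1, by omega⟩, by ext; simp only [Fin.val_succ]; omega⟩
      have := ih (b := j.castSucc) (by simp only [Fin.val_succ, Fin.val_castSucc] at hab hb ⊢; omega)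
      linarith [hδ j]

theorem statement13_general (k R : ℕ) (hk : 1 ≤ k)
    (w : Fin (R + 1) → unitInterval) (hw : Monotone w)
    (α : Fin (k + 1) → Fin (R + 1))
    (hgrid : ∀ i : Fin (k + 1), (w (α i) : ℝ) = (i : ℕ) / k) :
    (∀ j : Fin R, (w j.succ : ℝ) - (w j.castSucc : ℝ) ≤ 1 / k) ∧
    ∀ (n m : ℕ) (θ : Fin (n + 1) → Fin (R + 1)), Monotone θ →
      ((θ (Fin.last n) : ℕ) ≤ (θ 0 : ℕ) + m) →
      (w (θ (Fin.last n)) : ℝ) - (w (θ 0) : ℝ) ≤ (m : ℝ) / k := by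
  have hwℝ : Monotone fun x ↦ (w x : ℝ) := fun _ _ h ↦ hw h
  have hgap : ∀ j : Fin R, (w j.succ : ℝ) - (w j.castSucc : ℝ) ≤ 1 / k := by
    intro j
    by_contra! hj
    obtain ⟨i, hik, hi⟩ := exists_nat_div_mem_Ioo hk (w j.castSucc).2.1 (w j.succ).2.2
      (by linarith)
    exact hwℝ.apply_notMem_Ioo_castSucc_succ j (α ⟨i, by omega⟩) (by rwa [hgrid])
  refine ⟨hgap, fun n m θ _ hspan ↦ ?_⟩
  rw [← mul_one_div]
  exact Fin.apply_sub_apply_le_of_succ_sub_castSucc_le hwℝ (by positivity) hgap hspan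

/-- let `k ≥ 1` and let `u : Fin (k+1) → [0,1]` be the uniform grid
`u i = i / k`. If a monotone simplex `w : Fin (R+1) → [0,1]` of the nerve of `[0,1]`
admits `u` as a face, i.e. there is a monotone `α : Fin (k+1) → Fin (R+1)` with
`w (α i) = i / k` for all `i`, then consecutive values of `w` differ by at most `1/k`;
consequently, every face `v = w ∘ θ` along a monotone `θ : Fin (n+1) → Fin (R+1)` of
index span at most `m` (i.e. `θ(n) ≤ θ(0) + m`) satisfies `v(n) − v(0) ≤ m/k`. -/
theorem statement13 (k R : ℕ) (hk : 1 ≤ k)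
    (w : Fin (R + 1) → unitInterval) (hw : Monotone w)
    (α : Fin (k + 1) → Fin (R + 1)) (hα : Monotone α)
    (hgrid : ∀ i : Fin (k + 1), (w (α i) : ℝ) = (i : ℕ) / k) :
    (∀ j : Fin R, (w j.succ : ℝ) - (w j.castSucc : ℝ) ≤ 1 / k) ∧
    ∀ (n m : ℕ) (θ : Fin (n + 1) → Fin (R + 1)), Monotone θ →
      ((θ (Fin.last n) : ℕ) ≤ (θ 0 : ℕ) + m) →
      (w (θ (Fin.last n)) : ℝ) - (w (θ 0) : ℝ) ≤ (m : ℝ) / k :=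
  statement13_general k R hk w hw α hgrid
end
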